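/- Suppose N ≥ 2 bidders have an exchangeable prior λ on V^N with some profile v ∈ supp(λ) in which two bidders have different values. If an information structure has mutually independent signals (private private) and a Bayes Nash equilibrium σ in which the allocation is always efficient (the winner has the maximal value) and bids equal signals, then the seller's expected revenue is strictly positive; equivalently, aggregate bidder surplus is strictly below E[max_i v_i]. -/

import Mathlib

open scoped Classical BigOperators

/-- Highest coordinate. -/
noncomputable def maxVal {N : ℕ} (β : Fin N → ℝ) : ℝ := sSup (Set.range β)

/-- Second-highest coordinate. -/
noncomputable def secmax {N : ℕ} (β : Fin N → ℝ) : ℝ :=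
  sInf {x | ∃ i : Fin N, x = sSup {y | ∃ j : Fin N, j ≠ i ∧ y = β j}}

/-- Uniform tie-breaking winning share. -/
noncomputable def winShare {N : ℕ} (β : Fin N → ℝ) (i : Fin N) : ℝ :=
  if β i = maxVal β then
    1 / ((Finset.univ.filter fun j => β j = maxVal β).card : ℝ)
  else 0

/-!
By exchangeability every bidder `i` has, with positive probability, a value profile in which
`i`'s value is not the highest, so efficiency forces `i` to lose at some signal profile of positive
probability: another bidder's signal is strictly higher, hence positive. Apply this to some
bidder `i`, then to the bidder `j` beating `i`: independence splices `j`'s positive signal into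
the profile where `j` loses, giving a profile of positive probability with two positive signals,
i.e. a positive second-highest bid.
-/
open Finset Fintype

/-- The support of a product law is the product of the supports of its marginals. -/
theorem pos_of_forall_exists_pos_apply_eq {ι α : Type*} [Fintype ι] [DecidableEq ι]
    [DecidableEq α] {S : ι → Finset α} {P : (ι → α) → ℝ} (hP0 : ∀ s, 0 ≤ P s)
    (hprod : ∀ s ∈ piFinset S,
      P s = ∏ i, ∑ s' ∈ (piFinset S).filter (fun s' => s' i = s i), P s')
    {r : ι → α} (hr : r ∈ piFinset S) (h : ∀ i, ∃ s ∈ piFinset S, 0 < P s ∧ s i = r i) :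
    0 < P r := by
  rw [hprod r hr]
  refine prod_pos fun i _ => ?_
  obtain ⟨s, hs, hPs, hsi⟩ := h i
  exact hPs.trans_le <| single_le_sum (fun s' _ => hP0 s') (mem_filter.2 ⟨hs, hsi⟩)

section Order

variable {N : ℕ}

theorem le_maxVal (β : Fin N → ℝ) (i : Fin N) : β i ≤ maxVal β :=
  le_csSup (Set.finite_range β).bddAbove ⟨i, rfl⟩

theorem maxVal_eq_of_forall_le {β : Fin N → ℝ} {i : Fin N} (h : ∀ k, β k ≤ β i) :
    maxVal β = β i :=
  IsGreatest.csSup_eq ⟨⟨i, rfl⟩, by rintro _ ⟨k, rfl⟩; exact h k⟩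

theorem exists_apply_eq_maxVal [Nonempty (Fin N)] (β : Fin N → ℝ) : ∃ i, β i = maxVal β :=
  (Set.range_nonempty β).csSup_mem (Set.finite_range β)

theorem maxVal_comp_perm (β : Fin N → ℝ) (τ : Equiv.Perm (Fin N)) :
    maxVal (β ∘ τ) = maxVal β := by
  simp only [maxVal, EquivLike.range_comp]

theorem exists_lt_maxVal_of_ne {β : Fin N → ℝ} {a b : Fin N} (hab : β a ≠ β b) :
    ∃ j, β j < maxVal β := by
  rcases (le_maxVal β a).lt_or_eq with ha | ha
  · exact ⟨a, ha⟩
  · exact ⟨b, (le_maxVal β b).lt_of_ne fun hb => hab (ha.trans hb.symm)⟩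

theorem apply_le_sSup_of_ne (β : Fin N → ℝ) {i j : Fin N} (hji : j ≠ i) :
    β j ≤ sSup {y | ∃ j : Fin N, j ≠ i ∧ y = β j} :=
  le_csSup ((Set.finite_range β).subset (by rintro _ ⟨k, -, rfl⟩; exact ⟨k, rfl⟩)).bddAbove
    ⟨j, hji, rfl⟩

theorem secmax_nonneg {β : Fin N → ℝ} (hβ : ∀ j, 0 ≤ β j) : 0 ≤ secmax β := by
  refine Real.sInf_nonneg ?_
  rintro _ ⟨i, rfl⟩
  exact Real.sSup_nonneg (by rintro _ ⟨j, -, rfl⟩; exact hβ j)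

theorem secmax_pos {β : Fin N → ℝ} {i j : Fin N} (hij : i ≠ j) (hi : 0 < β i)
    (hj : 0 < β j) : 0 < secmax β := by
  refine (lt_min hi hj).trans_le (le_csInf ⟨_, i, rfl⟩ ?_)
  rintro _ ⟨k, rfl⟩
  by_cases hk : k = i
  · subst hk
    exact (min_le_right _ _).trans (apply_le_sSup_of_ne β hij.symm)
  · exact (min_le_left _ _).trans (apply_le_sSup_of_ne β (Ne.symm hk))

end Order

section WinShare

variable {N : ℕ}

theorem winShare_nonneg (β : Fin N → ℝ) (i : Fin N) : 0 ≤ winShare β i := by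
  unfold winShare
  split <;> positivity

theorem winShare_pos {β : Fin N → ℝ} {i : Fin N} (h : β i = maxVal β) :
    0 < winShare β i := by
  have hcard : 0 < (univ.filter fun j => β j = maxVal β).card :=
    card_pos.2 ⟨i, mem_filter.2 ⟨mem_univ i, h⟩⟩
  rw [winShare, if_pos h]
  positivity

theorem sum_winShare [Nonempty (Fin N)] (β : Fin N → ℝ) : ∑ i, winShare β i = 1 := by
  obtain ⟨i, hi⟩ := exists_apply_eq_maxVal β
  set F := univ.filter fun j => β j = maxVal β
  have hF : (F.card : ℝ) ≠ 0 := Nat.cast_ne_zero.2 (card_ne_zero.2 ⟨i, by simp [F, hi]⟩)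
  calc ∑ i, winShare β i = ∑ _i ∈ F, 1 / (F.card : ℝ) := by rw [sum_filter]; rfl
    _ = 1 := by rw [sum_const, nsmul_eq_mul]; field_simp

theorem sum_winShare_mul_sub [Nonempty (Fin N)] {β v : Fin N → ℝ} (c : ℝ)
    (hv : ∀ i, 0 < winShare β i → v i = maxVal v) :
    ∑ i, winShare β i * (v i - c) = maxVal v - c := by
  calc ∑ i, winShare β i * (v i - c) = ∑ i, winShare β i * (maxVal v - c) := by
        refine sum_congr rfl fun i _ => ?_
        rcases (winShare_nonneg β i).lt_or_eq with h | h
        · rw [hv i h]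
        · rw [← h, zero_mul, zero_mul]
    _ = maxVal v - c := by rw [← sum_mul, sum_winShare, one_mul]

end WinShare

section Auction

variable {N : ℕ} {PV T : Finset (Fin N → ℝ)} {lam : (Fin N → ℝ) → ℝ}
  {π : (Fin N → ℝ) → (Fin N → ℝ) → ℝ}

theorem exists_pos_lt_of_efficient (hπ0 : ∀ v s, 0 ≤ π v s)
    (hmarg : ∀ v ∈ PV, ∑ s ∈ T, π v s = lam v)
    (heff : ∀ v ∈ PV, ∀ s ∈ T, π v s ≠ 0 → ∀ i, 0 < winShare s i → v i = maxVal v)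
    {w : Fin N → ℝ} (hw : w ∈ PV) (hlam : lam w ≠ 0) {i : Fin N} (hi : w i < maxVal w) :
    ∃ s ∈ T, 0 < ∑ v ∈ PV, π v s ∧ ∃ k, s i < s k := by
  obtain ⟨s, hs, hπ⟩ := exists_ne_zero_of_sum_ne_zero (hmarg w hw ▸ hlam)
  refine ⟨s, hs, ((hπ0 w s).lt_of_ne' hπ).trans_le
    (single_le_sum (f := fun v => π v s) (fun v _ => hπ0 v s) hw), ?_⟩
  by_contra! hwin
  exact hi.ne (heff w hw s hs hπ i (winShare_pos (maxVal_eq_of_forall_le hwin).symm))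

theorem exists_pos_secmax_pos [Nonempty (Fin N)] {S : Fin N → Finset ℝ}
    {P : (Fin N → ℝ) → ℝ} (hS : ∀ i, ∀ x ∈ S i, 0 ≤ x) (hP0 : ∀ s, 0 ≤ P s)
    (hprod : ∀ s ∈ piFinset S,
      P s = ∏ i, ∑ s' ∈ (piFinset S).filter (fun s' => s' i = s i), P s')
    (hlose : ∀ i, ∃ s ∈ piFinset S, 0 < P s ∧ ∃ k, s i < s k) :
    ∃ r ∈ piFinset S, 0 < P r ∧ 0 < secmax r := by
  have hS' : ∀ s ∈ piFinset S, ∀ k, 0 ≤ s k := fun s hs k => hS k _ (mem_piFinset.1 hs k)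
  obtain ⟨s, hs, hPs, j, hij⟩ := hlose (Classical.arbitrary _)
  obtain ⟨t, ht, hPt, k, hjk⟩ := hlose j
  have hkj : k ≠ j := by rintro rfl; exact lt_irrefl _ hjk
  set r := Function.update t j (s j)
  have hr : r ∈ piFinset S := mem_piFinset.2 fun m => by
    by_cases hm : m = j
    · subst hm; simpa [r] using mem_piFinset.1 hs m
    · simpa [r, hm] using mem_piFinset.1 ht m
  refine ⟨r, hr, pos_of_forall_exists_pos_apply_eq hP0 hprod hr fun m => ?_,
    secmax_pos hkj ?_ ?_⟩
  · by_cases hm : m = j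
    · exact ⟨s, hs, hPs, by simp [r, hm]⟩
    · exact ⟨t, ht, hPt, by simp [r, hm]⟩
  · simpa [r, hkj] using (hS' t ht j).trans_lt hjk
  · simpa [r] using (hS' s hs _).trans_lt hij

theorem sum_mul_secmax_pos (hT : ∀ s ∈ T, ∀ k, 0 ≤ s k) (hπ0 : ∀ v s, 0 ≤ π v s)
    (h : ∃ s ∈ T, 0 < ∑ v ∈ PV, π v s ∧ 0 < secmax s) :
    0 < ∑ v ∈ PV, ∑ s ∈ T, π v s * secmax s := by
  obtain ⟨s₀, hs₀, hP, hsec⟩ := h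
  rw [sum_comm]
  simp_rw [← sum_mul]
  exact sum_pos'
    (fun s hs => mul_nonneg (sum_nonneg fun v _ => hπ0 v s) (secmax_nonneg (hT s hs)))
    ⟨s₀, hs₀, mul_pos hP hsec⟩

theorem sum_surplus_eq [Nonempty (Fin N)] (hmarg : ∀ v ∈ PV, ∑ s ∈ T, π v s = lam v)
    (heff : ∀ v ∈ PV, ∀ s ∈ T, π v s ≠ 0 → ∀ i, 0 < winShare s i → v i = maxVal v) :
    ∑ v ∈ PV, ∑ s ∈ T, π v s * ∑ i, winShare s i * (v i - secmax s)
      = ∑ v ∈ PV, lam v * maxVal v - ∑ v ∈ PV, ∑ s ∈ T, π v s * secmax s := by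
  rw [← sum_sub_distrib]
  refine sum_congr rfl fun v hv => ?_
  rw [← hmarg v hv, sum_mul, ← sum_sub_distrib]
  refine sum_congr rfl fun s hs => ?_
  by_cases hπ : π v s = 0
  · simp [hπ]
  · rw [sum_winShare_mul_sub _ (heff v hv s hs hπ), mul_sub]

end Auction

theorem private_private_revenue_positive_general (N : ℕ)
    (PV : Finset (Fin N → ℝ)) (lam : (Fin N → ℝ) → ℝ)
    (hPVperm : ∀ (τ : Equiv.Perm (Fin N)) (v : Fin N → ℝ), v ∈ PV → v ∘ τ ∈ PV)
    (hsym : ∀ (τ : Equiv.Perm (Fin N)) (v : Fin N → ℝ), lam (v ∘ τ) = lam v)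
    (hdiff : ∃ v ∈ PV, lam v ≠ 0 ∧ ∃ i j : Fin N, v i ≠ v j)
    (S : Fin N → Finset ℝ) (hS : ∀ i, ∀ x ∈ S i, 0 ≤ x)
    (π : (Fin N → ℝ) → (Fin N → ℝ) → ℝ)
    (hπ0 : ∀ v s, 0 ≤ π v s)
    (hmarg : ∀ v ∈ PV, ∑ s ∈ Fintype.piFinset S, π v s = lam v)
    -- private private: the signal marginal is the product of its coordinate marginals
    (hpp : ∀ s ∈ Fintype.piFinset S,
      (∑ v ∈ PV, π v s) =
        ∏ i, (∑ s' ∈ (Fintype.piFinset S).filter (fun s' => s' i = s i),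
          ∑ v ∈ PV, π v s'))
    -- efficiency: whenever a bidder wins with positive probability, she has maximal value
    (heff : ∀ v ∈ PV, ∀ s ∈ Fintype.piFinset S, π v s ≠ 0 →
      ∀ i, 0 < winShare s i → v i = maxVal v) :
    0 < (∑ v ∈ PV, ∑ s ∈ Fintype.piFinset S, π v s * secmax s) ∧
    (∑ v ∈ PV, ∑ s ∈ Fintype.piFinset S, π v s *
        ∑ i, winShare s i * (v i - secmax s))
      < ∑ v ∈ PV, lam v * maxVal v := by
  obtain ⟨v, hv, hlam, a, b, hab⟩ := hdiff
  have : Nonempty (Fin N) := ⟨a⟩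
  have hlose : ∀ i, ∃ s ∈ piFinset S, 0 < ∑ v ∈ PV, π v s ∧ ∃ k, s i < s k := fun i => by
    obtain ⟨j, hj⟩ := exists_lt_maxVal_of_ne hab
    refine exists_pos_lt_of_efficient hπ0 hmarg heff (hPVperm (Equiv.swap i j) v hv)
      (by rwa [hsym]) (i := i) ?_
    simpa [maxVal_comp_perm] using hj
  have hrev : 0 < ∑ v ∈ PV, ∑ s ∈ piFinset S, π v s * secmax s :=
    sum_mul_secmax_pos (fun s hs k => hS k _ (mem_piFinset.1 hs k)) hπ0
      (exists_pos_secmax_pos hS (fun s => sum_nonneg fun v _ => hπ0 v s) hpp hlose)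
  exact ⟨hrev, by rw [sum_surplus_eq hmarg heff]; linarith⟩

/-- Impossibility of full surplus for bidders under private private information: with an
exchangeable prior `lam` whose support contains a profile where two bidders have
different values, any information structure with mutually independent (nonnegative)
signals admitting a Bayes Nash equilibrium in which bids equal signals and the
allocation is always efficient yields strictly positive seller revenue; equivalently,
aggregate bidder surplus is strictly below `E[max v]`. -/
theorem private_private_revenue_positive (N : ℕ) (hN : 2 ≤ N)
    (PV : Finset (Fin N → ℝ)) (lam : (Fin N → ℝ) → ℝ)
    (hl0 : ∀ v, 0 ≤ lam v) (hl1 : ∑ v ∈ PV, lam v = 1)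
    (hPVperm : ∀ (τ : Equiv.Perm (Fin N)) (v : Fin N → ℝ), v ∈ PV → v ∘ τ ∈ PV)
    (hsym : ∀ (τ : Equiv.Perm (Fin N)) (v : Fin N → ℝ), lam (v ∘ τ) = lam v)
    (hdiff : ∃ v ∈ PV, lam v ≠ 0 ∧ ∃ i j : Fin N, v i ≠ v j)
    (S : Fin N → Finset ℝ) (hS : ∀ i, ∀ x ∈ S i, 0 ≤ x)
    (π : (Fin N → ℝ) → (Fin N → ℝ) → ℝ)
    (hπ0 : ∀ v s, 0 ≤ π v s)
    (hmarg : ∀ v ∈ PV, ∑ s ∈ Fintype.piFinset S, π v s = lam v)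
    -- private private: the signal marginal is the product of its coordinate marginals
    (hpp : ∀ s ∈ Fintype.piFinset S,
      (∑ v ∈ PV, π v s) =
        ∏ i, (∑ s' ∈ (Fintype.piFinset S).filter (fun s' => s' i = s i),
          ∑ v ∈ PV, π v s'))
    -- efficiency: whenever a bidder wins with positive probability, she has maximal value
    (heff : ∀ v ∈ PV, ∀ s ∈ Fintype.piFinset S, π v s ≠ 0 →
      ∀ i, 0 < winShare s i → v i = maxVal v)
    -- truthful bidding (bids = signals) is a Bayes Nash equilibrium
    (hBNE : ∀ i (d : ℝ → ℝ),
      (∑ v ∈ PV, ∑ s ∈ Fintype.piFinset S, π v s *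
          (winShare (Function.update s i (d (s i))) i *
            (v i - secmax (Function.update s i (d (s i))))))
      ≤ ∑ v ∈ PV, ∑ s ∈ Fintype.piFinset S, π v s *
          (winShare s i * (v i - secmax s))) :
    0 < (∑ v ∈ PV, ∑ s ∈ Fintype.piFinset S, π v s * secmax s) ∧
    (∑ v ∈ PV, ∑ s ∈ Fintype.piFinset S, π v s *
        ∑ i, winShare s i * (v i - secmax s))
      < ∑ v ∈ PV, lam v * maxVal v :=
  private_private_revenue_positive_general N PV lam hPVperm hsym hdiff S hS π hπ0 hmarg hpp heff
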